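/- arXiv:1301.5999 — 3 statements merged into one kernel-verified Lean document; each statement's English description precedes it below -/
import Mathlib

section
/- Let D ⊆ ℝ² be open and let F : D → SU(2) and A, B, θ, ρ : D → ℝ be smooth maps satisfying the frame equations F⁻¹·∂ᵤF = -(∂ᵤθ/2)·e₃ + ((ρ-1)/2)·A·ξ₁(θ) and F⁻¹·∂ᵥF = (∂ᵥθ/2)·e₃ - ((ρ+1)/2)·B·ξ₂(θ) on D. Define the normal Gauss map ν = F·e₃·F⁻¹. Then at each point p ∈ D, the mixed partial derivative ∂ᵥ∂ᵤν(p) is a real scalar multiple of ν(p) if and only if ∂ᵥ(A·(ρ-1))(p) = 0. -/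
open Matrix

attribute [local instance] Matrix.frobeniusNormedAddCommGroup Matrix.frobeniusNormedSpace

noncomputable section

/-- Basis of su(2). -/
def e1 : Matrix (Fin 2) (Fin 2) ℂ := !![0, 1; -1, 0]
def e2 : Matrix (Fin 2) (Fin 2) ℂ := !![0, Complex.I; Complex.I, 0]
def e3 : Matrix (Fin 2) (Fin 2) ℂ := !![Complex.I, 0; 0, -Complex.I]

def xi1 (θ : ℝ) : Matrix (Fin 2) (Fin 2) ℂ := Real.cos θ • e1 - Real.sin θ • e2
def xi2 (θ : ℝ) : Matrix (Fin 2) (Fin 2) ℂ := Real.cos θ • e1 + Real.sin θ • e2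

/-- Partial derivative in the `u` direction. -/
def pu {E : Type*} [NormedAddCommGroup E] [NormedSpace ℝ E]
    (f : ℝ × ℝ → E) (p : ℝ × ℝ) : E := fderiv ℝ f p (1, 0)

/-- Partial derivative in the `v` direction. -/
def pv {E : Type*} [NormedAddCommGroup E] [NormedSpace ℝ E]
    (f : ℝ × ℝ → E) (p : ℝ × ℝ) : E := fderiv ℝ f p (0, 1)

/-- The normal Gauss map `ν = F·e₃·F⁻¹`. -/
def nu (F : ℝ × ℝ → Matrix (Fin 2) (Fin 2) ℂ) (p : ℝ × ℝ) : Matrix (Fin 2) (Fin 2) ℂ :=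
  F p * e3 * (F p)⁻¹

section HarmAux
attribute [local instance] Matrix.frobeniusNormedRing Matrix.frobeniusNormedAlgebra

namespace HarmAux

abbrev Mat := Matrix (Fin 2) (Fin 2) ℂ

/-- bracket of `xi1 θ` with `e3`. -/
def Y (τ : ℝ) : Mat := xi1 τ * e3 - e3 * xi1 τ

/-- derivative of `xi1`. -/
def Z (τ : ℝ) : Mat := (-Real.sin τ) • e1 - Real.cos τ • e2

lemma keyId (θ t γ : ℝ) :
    ((t / 2) • e3 - γ • xi2 θ) * Y θ - Y θ * ((t / 2) • e3 - γ • xi2 θ)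
      + t • (Z θ * e3 - e3 * Z θ)
    = (4 * γ * (Real.cos θ ^ 2 - Real.sin θ ^ 2)) • e3 := by
  ext i j
  fin_cases i <;> fin_cases j <;>
    simp [Y, Z, e1, e2, e3, xi1, xi2, Matrix.mul_apply, Fin.sum_univ_two, Complex.ext_iff,
      pow_two, Complex.mul_re, Complex.mul_im] <;>
    exact ⟨by ring, by ring⟩

lemma Yentry (θ : ℝ) : Y θ 0 1 = -(2 * Real.sin θ) - (2 * Real.cos θ) * Complex.I := by
  simp [Y, e1, e2, e3, xi1, Matrix.mul_apply, Fin.sum_univ_two, Complex.ext_iff]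
  constructor <;> ring

lemma e3entry : e3 0 1 = 0 := by simp [e3]

/-- conjugate transpose as a continuous `ℝ`-linear map. -/
def ctL : Mat →L[ℝ] Mat :=
  LinearMap.toContinuousLinearMap
    { toFun := fun M => Mᴴ
      map_add' := fun x y => Matrix.conjTranspose_add x y
      map_smul' := fun r x => by
        ext i j
        simp [Matrix.conjTranspose_apply, Complex.real_smul] }

@[simp] lemma ctL_apply (M : Mat) : ctL M = Mᴴ := rfl

lemma fderiv_mul_apply {f g : ℝ × ℝ → Mat} {p : ℝ × ℝ} (hf : DifferentiableAt ℝ f p)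
    (hg : DifferentiableAt ℝ g p) (w : ℝ × ℝ) :
    fderiv ℝ (fun q => f q * g q) p w
      = fderiv ℝ f p w * g p + f p * fderiv ℝ g p w := by
  have h2 := congrArg (fun L => L w) (hf.hasFDerivAt.mul' hg.hasFDerivAt).fderiv
  simp only [ContinuousLinearMap.add_apply, ContinuousLinearMap.smul_apply,
    ContinuousLinearMap.smulRight_apply, smul_eq_mul] at h2
  rw [add_comm]
  exact h2

lemma fderiv_mul3_apply {f g h : ℝ × ℝ → Mat} {p : ℝ × ℝ} (hf : DifferentiableAt ℝ f p)
    (hg : DifferentiableAt ℝ g p) (hh : DifferentiableAt ℝ h p) (w : ℝ × ℝ) :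
    fderiv ℝ (fun q => f q * g q * h q) p w
      = fderiv ℝ f p w * g p * h p + f p * fderiv ℝ g p w * h p
        + f p * g p * fderiv ℝ h p w := by
  have h2 := congrArg (fun L => L w)
    ((hf.hasFDerivAt.mul' hg.hasFDerivAt).mul' hh.hasFDerivAt).fderiv
  simp only [ContinuousLinearMap.add_apply, ContinuousLinearMap.smul_apply,
    ContinuousLinearMap.smulRight_apply, smul_eq_mul, Pi.mul_apply] at h2
  have h3 : f p * g p * fderiv ℝ h p w + (f p * fderiv ℝ g p w + fderiv ℝ f p w * g p) * h p
      = fderiv ℝ f p w * g p * h p + f p * fderiv ℝ g p w * h p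
        + f p * g p * fderiv ℝ h p w := by noncomm_ring
  exact h2.trans h3

end HarmAux
end HarmAux
section HarmMain
attribute [local instance] Matrix.frobeniusNormedRing Matrix.frobeniusNormedAlgebra
set_option maxHeartbeats 2000000 in
open HarmAux in
theorem HarmAux.main
    (D : Set (ℝ × ℝ)) (hD : IsOpen D)
    (F : ℝ × ℝ → Matrix (Fin 2) (Fin 2) ℂ) (A B θ ρ : ℝ × ℝ → ℝ)
    (hF : ContDiffOn ℝ (⊤ : ℕ∞) F D) (hA : ContDiffOn ℝ (⊤ : ℕ∞) A D) (hB : ContDiffOn ℝ (⊤ : ℕ∞) B D)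
    (hθ : ContDiffOn ℝ (⊤ : ℕ∞) θ D) (hρ : ContDiffOn ℝ (⊤ : ℕ∞) ρ D)
    (hSU : ∀ p ∈ D, F p ∈ Matrix.specialUnitaryGroup (Fin 2) ℂ)
    (hu : ∀ p ∈ D, (F p)⁻¹ * pu F p
        = (-(pu θ p) / 2) • e3 + ((ρ p - 1) / 2 * A p) • xi1 (θ p))
    (hv : ∀ p ∈ D, (F p)⁻¹ * pv F p
        = (pv θ p / 2) • e3 - ((ρ p + 1) / 2 * B p) • xi2 (θ p))
    (p : ℝ × ℝ) (hp : p ∈ D) :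
    (∃ k : ℝ, pv (pu (nu F)) p = k • nu F p) ↔
      pv (fun q => A q * (ρ q - 1)) p = 0 := by
  classical
  set G : ℝ × ℝ → Mat := fun q => (F q)ᴴ with hGdef
  have hFG : ∀ q ∈ D, F q * G q = 1 := by
    intro q hq
    have h1 := (Matrix.mem_specialUnitaryGroup_iff.mp (hSU q hq)).1
    simpa [Matrix.star_eq_conjTranspose] using Matrix.mem_unitaryGroup_iff.mp h1
  have hGF : ∀ q ∈ D, G q * F q = 1 := by
    intro q hq
    have h1 := (Matrix.mem_specialUnitaryGroup_iff.mp (hSU q hq)).1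
    simpa [Matrix.star_eq_conjTranspose] using Matrix.mem_unitaryGroup_iff'.mp h1
  have hinv : ∀ q ∈ D, (F q)⁻¹ = G q := fun q hq => Matrix.inv_eq_right_inv (hFG q hq)
  have hFd : ∀ q ∈ D, DifferentiableAt ℝ F q := fun q hq =>
    (hF.differentiableOn (by simp) q hq).differentiableAt (hD.mem_nhds hq)
  have hGfd : ∀ q ∈ D, HasFDerivAt G (ctL.comp (fderiv ℝ F q)) q := fun q hq =>
    ctL.hasFDerivAt.comp q (hFd q hq).hasFDerivAt
  have hGd : ∀ q ∈ D, DifferentiableAt ℝ G q := fun q hq => (hGfd q hq).differentiableAt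
  -- derivative of the inverse
  have hIone : ∀ q ∈ D, ∀ w, fderiv ℝ F q w * G q + F q * fderiv ℝ G q w = 0 := by
    intro q hq w
    have hev : (fun r => F r * G r) =ᶠ[nhds q] fun _ => (1 : Mat) := by
      filter_upwards [hD.mem_nhds hq] with r hr using hFG r hr
    have h0 : fderiv ℝ (fun r => F r * G r) q = 0 := by
      rw [hev.fderiv_eq]
      exact fderiv_const_apply (1 : Mat)
    have h1 := fderiv_mul_apply (hFd q hq) (hGd q hq) w
    rw [h0] at h1
    simpa using h1.symm
  have hGder : ∀ q ∈ D, ∀ w, fderiv ℝ G q w = -(G q * fderiv ℝ F q w * G q) := by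
    intro q hq w
    have h1 : F q * fderiv ℝ G q w = -(fderiv ℝ F q w * G q) :=
      eq_neg_of_add_eq_zero_left (by rw [add_comm]; exact hIone q hq w)
    calc fderiv ℝ G q w = (G q * F q) * fderiv ℝ G q w := by rw [hGF q hq, one_mul]
      _ = G q * (F q * fderiv ℝ G q w) := by rw [mul_assoc]
      _ = -(G q * fderiv ℝ F q w * G q) := by rw [h1, mul_neg, mul_assoc]
  -- the coefficient β and the logarithmic derivative U in the u-direction
  set β : ℝ × ℝ → ℝ := fun q => (ρ q - 1) / 2 * A q with hβdef
  set U : ℝ × ℝ → Mat := fun q => G q * fderiv ℝ F q (1, 0) with hUdef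
  have hu' : ∀ q ∈ D, U q = (-(pu θ q) / 2) • e3 + β q • xi1 (θ q) := by
    intro q hq
    have := hu q hq
    rw [hinv q hq] at this
    simp [hUdef, hβdef, pu] at this ⊢; exact this
  have hFU : ∀ q ∈ D, fderiv ℝ F q (1, 0) = F q * U q := by
    intro q hq
    rw [hUdef]
    simp only
    rw [← mul_assoc, hFG q hq, one_mul]
  -- Step B : the u-derivative of the Gauss map
  have hPU : ∀ q ∈ D, pu (nu F) q = β q • (F q * Y (θ q) * G q) := by
    intro q hq
    have hev : nu F =ᶠ[nhds q] fun r => F r * e3 * G r := by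
      filter_upwards [hD.mem_nhds hq] with r hr
      simp [nu, hinv r hr]
    have hd : pu (nu F) q = fderiv ℝ (fun r => F r * e3 * G r) q (1, 0) := by
      rw [pu]; erw [hev.fderiv_eq]; rfl
    have step : pu (nu F) q = F q * (U q * e3 - e3 * U q) * G q := by
      rw [hd, fderiv_mul3_apply (hFd q hq) (differentiableAt_const _) (hGd q hq)]
      erw [fderiv_const]
      simp only [fderiv_const, Pi.zero_apply, ContinuousLinearMap.zero_apply, mul_zero,
        zero_mul, add_zero]
      rw [hGder q hq (1, 0), hFU q hq]
      have hGFU : G q * (F q * U q) = U q := by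
        rw [← mul_assoc, hGF q hq, one_mul]
      rw [hGFU]
      noncomm_ring
    have hcomm : U q * e3 - e3 * U q = β q • Y (θ q) := by
      rw [hu' q hq, Y]
      simp only [add_mul, mul_add, smul_mul_assoc, mul_smul_comm]
      module
    rw [step, hcomm, mul_smul_comm, smul_mul_assoc]
  -- pointwise data at p
  have hθd : DifferentiableAt ℝ θ p :=
    (hθ.differentiableOn (by simp) p hp).differentiableAt (hD.mem_nhds hp)
  have hAd : DifferentiableAt ℝ A p :=
    (hA.differentiableOn (by simp) p hp).differentiableAt (hD.mem_nhds hp)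
  have hρd : DifferentiableAt ℝ ρ p :=
    (hρ.differentiableOn (by simp) p hp).differentiableAt (hD.mem_nhds hp)
  have hβd : DifferentiableAt ℝ β p := by
    have h1 : DifferentiableAt ℝ (fun q => (ρ q - 1) / 2) p := by
      simp only [div_eq_mul_inv]
      exact (hρd.sub_const 1).mul_const _
    rw [hβdef]
    exact h1.mul hAd
  -- derivative of q ↦ xi1 (θ q)
  have hxid : HasFDerivAt (fun q => xi1 (θ q))
      ((((-Real.sin (θ p)) • fderiv ℝ θ p).smulRight e1)
        - (((Real.cos (θ p)) • fderiv ℝ θ p).smulRight e2)) p := by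
    have hc : HasFDerivAt (fun q => Real.cos (θ q)) ((-Real.sin (θ p)) • fderiv ℝ θ p) p :=
      (Real.hasDerivAt_cos (θ p)).comp_hasFDerivAt p hθd.hasFDerivAt
    have hs : HasFDerivAt (fun q => Real.sin (θ q)) ((Real.cos (θ p)) • fderiv ℝ θ p) p :=
      (Real.hasDerivAt_sin (θ p)).comp_hasFDerivAt p hθd.hasFDerivAt
    exact (hc.smul_const e1).sub (hs.smul_const e2)
  have hxifd : ∀ w, fderiv ℝ (fun q => xi1 (θ q)) p w = (fderiv ℝ θ p w) • Z (θ p) := by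
    intro w
    rw [hxid.fderiv]
    simp only [ContinuousLinearMap.sub_apply, ContinuousLinearMap.smulRight_apply,
      ContinuousLinearMap.smul_apply, smul_eq_mul, Z]
    rw [smul_sub, smul_smul, smul_smul]
    ring_nf
  have hYhas : HasFDerivAt (fun q => Y (θ q))
      (((((-Real.sin (θ p)) • fderiv ℝ θ p).smulRight e1)
        - (((Real.cos (θ p)) • fderiv ℝ θ p).smulRight e2)).smulRight e3
        - e3 • ((((-Real.sin (θ p)) • fderiv ℝ θ p).smulRight e1)
        - (((Real.cos (θ p)) • fderiv ℝ θ p).smulRight e2))) p :=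
    (hxid.mul_const' e3).sub (hxid.const_mul e3)
  have hYd : DifferentiableAt ℝ (fun q => Y (θ q)) p := hYhas.differentiableAt
  have hYfd : ∀ w, fderiv ℝ (fun q => Y (θ q)) p w
      = (fderiv ℝ θ p w) • (Z (θ p) * e3 - e3 * Z (θ p)) := by
    intro w
    have h1 : fderiv ℝ (fun q => Y (θ q)) p w
        = fderiv ℝ (fun q => xi1 (θ q)) p w * e3 - e3 * fderiv ℝ (fun q => xi1 (θ q)) p w := by
      rw [hYhas.fderiv, hxid.fderiv]
      simp only [ContinuousLinearMap.sub_apply, ContinuousLinearMap.smulRight_apply,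
        ContinuousLinearMap.smul_apply, smul_eq_mul]
    rw [h1, hxifd, smul_mul_assoc, mul_smul_comm, smul_sub]
  -- the v-direction logarithmic derivative at p
  set V : Mat := G p * fderiv ℝ F p (0, 1) with hVdef
  have hFV : fderiv ℝ F p (0, 1) = F p * V := by
    rw [hVdef, ← mul_assoc, hFG p hp, one_mul]
  have hVeq : V = (pv θ p / 2) • e3 - ((ρ p + 1) / 2 * B p) • xi2 (θ p) := by
    have := hv p hp
    rw [hinv p hp] at this
    simp [hVdef, pv] at this ⊢; exact this
  -- the key Lie-algebra identity
  have hW : V * Y (θ p) - Y (θ p) * V + (fderiv ℝ θ p (0, 1)) • (Z (θ p) * e3 - e3 * Z (θ p))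
      = (4 * ((ρ p + 1) / 2 * B p) * (Real.cos (θ p) ^ 2 - Real.sin (θ p) ^ 2)) • e3 := by
    rw [hVeq]
    exact keyId (θ p) (pv θ p) _
  set c0 : ℝ := β p * (4 * ((ρ p + 1) / 2 * B p) * (Real.cos (θ p) ^ 2 - Real.sin (θ p) ^ 2))
    with hc0def
  -- the main formula for the mixed derivative
  have hFYGd : DifferentiableAt ℝ (fun q => F q * Y (θ q) * G q) p :=
    ((hFd p hp).mul hYd).mul (hGd p hp)
  have hfinal : pv (pu (nu F)) p
      = F p * ((fderiv ℝ β p (0, 1)) • Y (θ p) + c0 • e3) * G p := by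
    have hev : pu (nu F) =ᶠ[nhds p] fun q => β q • (F q * Y (θ q) * G q) := by
      filter_upwards [hD.mem_nhds hp] with r hr using hPU r hr
    rw [pv]; erw [hev.fderiv_eq, fderiv_smul hβd hFYGd]
    simp only [ContinuousLinearMap.add_apply, ContinuousLinearMap.smul_apply,
      ContinuousLinearMap.smulRight_apply]
    erw [fderiv_mul3_apply (hFd p hp) hYd (hGd p hp), hYfd, hGder p hp (0, 1), hFV]
    have hGFV : G p * (F p * V) = V := by rw [← mul_assoc, hGF p hp, one_mul]
    rw [hGFV]
    have hc0e3 : c0 • e3 = β p • (V * Y (θ p) - Y (θ p) * V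
        + (fderiv ℝ θ p (0, 1)) • (Z (θ p) * e3 - e3 * Z (θ p))) := by
      rw [hW, hc0def, smul_smul]
    rw [hc0e3]
    simp only [mul_add, add_mul, mul_sub, sub_mul, mul_neg, neg_mul, smul_add, smul_sub,
      smul_mul_assoc, mul_smul_comm, mul_assoc]
    module
  have hnu : nu F p = F p * e3 * G p := by rw [nu, hinv p hp]
  -- relating the β-derivative to the derivative in the statement
  have hproD : DifferentiableAt ℝ (fun q => A q * (ρ q - 1)) p := hAd.mul (hρd.sub_const 1)
  have hβsplit : fderiv ℝ β p (0, 1)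
      = (1 / 2) * fderiv ℝ (fun q => A q * (ρ q - 1)) p (0, 1) := by
    have h1 : β = fun q => (1 / 2) * (A q * (ρ q - 1)) := by
      funext q; rw [hβdef]; ring
    rw [h1, fderiv_const_mul hproD]
    simp
  -- conjugation cancellation
  have hconj : ∀ X : Mat, G p * (F p * X * G p) * F p = X := by
    intro X
    have h2 : G p * (F p * X * G p) * F p = (G p * F p) * X * ((G p * F p) * 1) := by
      noncomm_ring
    rw [h2, hGF p hp]
    simp
  constructor
  · rintro ⟨k, hk⟩
    rw [hfinal, hnu] at hk
    have hcancel : (fderiv ℝ β p (0, 1)) • Y (θ p) + c0 • e3 = k • e3 := by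
      have h2 : F p * ((fderiv ℝ β p (0, 1)) • Y (θ p) + c0 • e3) * G p
          = F p * (k • e3) * G p := by
        rw [hk, mul_smul_comm, smul_mul_assoc]
      have h3 := congrArg (fun X => G p * X * F p) h2
      simpa only [hconj] using h3
    have hent := congrArg (fun M : Mat => M 0 1) hcancel
    simp only [Matrix.add_apply, Matrix.smul_apply, Yentry, e3entry, smul_zero, add_zero] at hent
    set r : ℝ := fderiv ℝ β p (0, 1) with hrdef
    have h2 : (r : ℂ) = 0 ∨
        (-(2 * (Real.sin (θ p) : ℂ)) - 2 * (Real.cos (θ p) : ℂ) * Complex.I) = 0 := by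
      apply mul_eq_zero.mp
      rw [← Complex.real_smul]
      exact_mod_cast hent
    have hr0 : r = 0 := by
      rcases h2 with h2 | h2
      · exact_mod_cast h2
      · exfalso
        simp only [Complex.ext_iff, Complex.sub_re, Complex.sub_im, Complex.neg_re,
          Complex.neg_im, Complex.mul_re, Complex.mul_im, Complex.I_re, Complex.I_im,
          Complex.ofReal_re, Complex.ofReal_im, Complex.re_ofNat, Complex.im_ofNat,
          Complex.zero_re, Complex.zero_im] at h2
        have hsc := Real.sin_sq_add_cos_sq (θ p)
        obtain ⟨ha, hb⟩ := h2
        nlinarith [ha, hb, hsc]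
    have hr0' : (1 / 2) * fderiv ℝ (fun q => A q * (ρ q - 1)) p (0, 1) = 0 :=
      hβsplit.symm.trans hr0
    have : fderiv ℝ (fun q => A q * (ρ q - 1)) p (0, 1) = 0 := by linarith
    simpa [pv] using this
  · intro h0
    have hr0 : fderiv ℝ β p (0, 1) = 0 := by
      rw [hβsplit]
      have : fderiv ℝ (fun q => A q * (ρ q - 1)) p (0, 1) = 0 := by simpa [pv] using h0
      rw [this]; ring
    refine ⟨c0, ?_⟩
    rw [hfinal, hnu, hr0, zero_smul, zero_add, mul_smul_comm, smul_mul_assoc]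
end HarmMain

theorem harmonicity_uv_iff
    (D : Set (ℝ × ℝ)) (hD : IsOpen D)
    (F : ℝ × ℝ → Matrix (Fin 2) (Fin 2) ℂ) (A B θ ρ : ℝ × ℝ → ℝ)
    (hF : ContDiffOn ℝ (⊤ : ℕ∞) F D) (hA : ContDiffOn ℝ (⊤ : ℕ∞) A D) (hB : ContDiffOn ℝ (⊤ : ℕ∞) B D)
    (hθ : ContDiffOn ℝ (⊤ : ℕ∞) θ D) (hρ : ContDiffOn ℝ (⊤ : ℕ∞) ρ D)
    (hSU : ∀ p ∈ D, F p ∈ Matrix.specialUnitaryGroup (Fin 2) ℂ)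
    (hu : ∀ p ∈ D, (F p)⁻¹ * pu F p
        = (-(pu θ p) / 2) • e3 + ((ρ p - 1) / 2 * A p) • xi1 (θ p))
    (hv : ∀ p ∈ D, (F p)⁻¹ * pv F p
        = (pv θ p / 2) • e3 - ((ρ p + 1) / 2 * B p) • xi2 (θ p))
    (p : ℝ × ℝ) (hp : p ∈ D) :
    (∃ k : ℝ, pv (pu (nu F)) p = k • nu F p) ↔
      pv (fun q => A q * (ρ q - 1)) p = 0 :=
  HarmAux.main D hD F A B θ ρ hF hA hB hθ hρ hSU hu hv p hp
end
end

section
/- (Ruh–Vilms property for constant curvature surfaces in S³.) Let D ⊆ ℝ² be open and let F : D → SU(2) and A, B, θ, ρ : D → ℝ be smooth maps satisfying the frame equations F⁻¹·∂ᵤF = -(∂ᵤθ/2)·e₃ + ((ρ-1)/2)·A·ξ₁(θ) and F⁻¹·∂ᵥF = (∂ᵥθ/2)·e₃ - ((ρ+1)/2)·B·ξ₂(θ) on D. Assume A > 0, B > 0, ρ > 0, ρ ≠ 1 and sin(2θ) ≠ 0 at every point of D, and that the Codazzi equations hold: writing a = A·ρ, b = B·ρ and φ = 2θ, ∂ᵥa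 - (∂ᵥρ/(2ρ))·a + (∂ᵤρ/(2ρ))·b·cos φ = 0 and ∂ᵤb - (∂ᵤρ/(2ρ))·b + (∂ᵥρ/(2ρ))·a·cos φ = 0 on D. Define the normal Gauss map ν = F·e₃·F⁻¹. Then the following are equivalent: (i) at every point p of D, both mixed partials ∂ᵥ∂ᵤν(p) and ∂ᵤ∂ᵥν(p) are real scalar multiples of ν(p) (ν is Lorentz harmonic with respect to the conformal structure of the second fundamental form); (ii) ∂ᵤρ = 0 and ∂ᵥρ = 0 identically on D, i.e. the Gauss curvature K = 1 - ρ² is constant. -/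
open Matrix

attribute [local instance] Matrix.frobeniusNormedAddCommGroup Matrix.frobeniusNormedSpace

noncomputable section

/- ########## auxiliary material ########## -/

attribute [local instance 80] Matrix.frobeniusNormedRing Matrix.frobeniusNormedAlgebra

/-- The adjugate of a 2×2 matrix, as a linear map. -/
def adjL : Matrix (Fin 2) (Fin 2) ℂ →ₗ[ℝ] Matrix (Fin 2) (Fin 2) ℂ where
  toFun X := X.trace • (1 : Matrix (Fin 2) (Fin 2) ℂ) - X
  map_add' X Y := by simp [Matrix.trace_add, add_smul]; abel
  map_smul' r X := by
    simp only [RingHom.id_apply, smul_sub]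
    rw [Matrix.trace_smul, smul_assoc]

def adjC : Matrix (Fin 2) (Fin 2) ℂ →L[ℝ] Matrix (Fin 2) (Fin 2) ℂ :=
  adjL.toContinuousLinearMap

lemma adjC_eq (X : Matrix (Fin 2) (Fin 2) ℂ) : adjC X = X.adjugate := by
  show X.trace • (1 : Matrix (Fin 2) (Fin 2) ℂ) - X = _
  rw [Matrix.adjugate_fin_two]
  ext i j
  fin_cases i <;> fin_cases j <;>
    simp [Matrix.trace_fin_two, Matrix.one_apply] <;> ring

lemma adjC_mul_traceless (Y W : Matrix (Fin 2) (Fin 2) ℂ) (hW : W.trace = 0) :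
    adjC (Y * W) = -(W * adjC Y) := by
  have h : W.adjugate = -W := by
    rw [← adjC_eq]
    show W.trace • (1 : Matrix (Fin 2) (Fin 2) ℂ) - W = -W
    rw [hW]; simp
  rw [adjC_eq, Matrix.adjugate_mul_distrib, h, adjC_eq]
  simp

lemma brU (a b t : ℝ) : (a • e3 + b • xi1 t) * e3 - e3 * (a • e3 + b • xi1 t)
    = (-2*b*Real.sin t) • e1 + (-2*b*Real.cos t) • e2 := by
  ext i j
  fin_cases i <;> fin_cases j <;>
    simp [e1, e2, e3, xi1, Matrix.mul_apply, Fin.sum_univ_two, Complex.ext_iff] <;>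
      exact ⟨by first|trivial|ring, by first|trivial|ring⟩

lemma brV (a b t : ℝ) : (a • e3 - b • xi2 t) * e3 - e3 * (a • e3 - b • xi2 t)
    = (-2*b*Real.sin t) • e1 + (2*b*Real.cos t) • e2 := by
  ext i j
  fin_cases i <;> fin_cases j <;>
    simp [e1, e2, e3, xi2, Matrix.mul_apply, Fin.sum_univ_two, Complex.ext_iff] <;>
      exact ⟨by first|trivial|ring, by first|trivial|ring⟩

lemma brW (c3 c1 c2 f g : ℝ) :
    (c3 • e3 + c1 • e1 + c2 • e2) * (f • e1 + g • e2)
      - (f • e1 + g • e2) * (c3 • e3 + c1 • e1 + c2 • e2)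
    = (-2*c3*g) • e1 + (2*c3*f) • e2 + (2*(c1*g - c2*f)) • e3 := by
  ext i j
  fin_cases i <;> fin_cases j <;>
    simp [e1, e2, e3, Matrix.mul_apply, Fin.sum_univ_two, Complex.ext_iff] <;>
      exact ⟨by first|trivial|ring, by first|trivial|ring⟩

lemma scalarE3 (a b c : ℝ) : (∃ k : ℝ, a • e1 + b • e2 + c • e3 = k • e3) ↔ a = 0 ∧ b = 0 := by
  constructor
  · rintro ⟨k, hk⟩
    have h01 := congrFun (congrFun hk 0) 1
    simp [e1, e2, e3, Complex.ext_iff] at h01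
    exact h01
  · rintro ⟨ha, hb⟩
    exact ⟨c, by simp [ha, hb]⟩

lemma traceU (a b t : ℝ) : (a • e3 + b • xi1 t).trace = 0 := by
  simp [e1, e2, e3, xi1, Matrix.trace_fin_two]

lemma traceV (a b t : ℝ) : (a • e3 - b • xi2 t).trace = 0 := by
  simp [e1, e2, e3, xi2, Matrix.trace_fin_two]

lemma Udecomp (a b t : ℝ) :
    a • e3 + b • xi1 t = a • e3 + (b * Real.cos t) • e1 + (-(b * Real.sin t)) • e2 := by
  simp only [xi1]; module

lemma Vdecomp (a b t : ℝ) :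
    a • e3 - b • xi2 t = a • e3 + (-(b * Real.cos t)) • e1 + (-(b * Real.sin t)) • e2 := by
  simp only [xi2]; module

lemma conj_cancel {Fp G X Y : Matrix (Fin 2) (Fin 2) ℂ} (h1 : G * Fp = 1)
    (h : Fp * X * G = Fp * Y * G) : X = Y := by
  calc X = (G * Fp) * X * (G * Fp) := by rw [h1]; simp
    _ = G * (Fp * X * G) * Fp := by noncomm_ring
    _ = G * (Fp * Y * G) * Fp := by rw [h]
    _ = (G * Fp) * Y * (G * Fp) := by noncomm_ring
    _ = Y := by rw [h1]; simp

lemma smul_conj (k : ℝ) (Fp G X : Matrix (Fin 2) (Fin 2) ℂ) :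
    Fp * (k • X) * G = k • (Fp * X * G) := by
  rw [Matrix.mul_smul, Matrix.smul_mul]

lemma deriv_formula (F C : ℝ × ℝ → Matrix (Fin 2) (Fin 2) ℂ) (p : ℝ × ℝ)
    (hF : DifferentiableAt ℝ F p) (hC : DifferentiableAt ℝ C p) (w : ℝ × ℝ) :
    fderiv ℝ (fun q => F q * C q * adjC (F q)) p w
      = fderiv ℝ F p w * C p * adjC (F p) + F p * (fderiv ℝ C p w) * adjC (F p)
        + F p * C p * adjC (fderiv ℝ F p w) := by
  have hG : HasFDerivAt (fun q => adjC (F q)) (adjC.comp (fderiv ℝ F p)) p :=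
    adjC.hasFDerivAt.comp p hF.hasFDerivAt
  have h := ((hF.hasFDerivAt.mul' hC.hasFDerivAt).mul' hG).fderiv
  rw [show fderiv ℝ (fun q => F q * C q * adjC (F q)) p = _ from h]
  change (F p * C p) * adjC (fderiv ℝ F p w)
    + (F p * fderiv ℝ C p w + fderiv ℝ F p w * C p) * adjC (F p) = _
  simp only [mul_add, add_mul, mul_assoc]
  abel

set_option maxHeartbeats 1000000 in
/-- Ruh–Vilms property for constant curvature surfaces in the 3-sphere. -/
theorem ruh_vilms_property
    (D : Set (ℝ × ℝ)) (hD : IsOpen D)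
    (F : ℝ × ℝ → Matrix (Fin 2) (Fin 2) ℂ) (A B θ ρ : ℝ × ℝ → ℝ)
    (hF : ContDiffOn ℝ (⊤ : ℕ∞) F D) (hA : ContDiffOn ℝ (⊤ : ℕ∞) A D) (hB : ContDiffOn ℝ (⊤ : ℕ∞) B D)
    (hθ : ContDiffOn ℝ (⊤ : ℕ∞) θ D) (hρ : ContDiffOn ℝ (⊤ : ℕ∞) ρ D)
    (hSU : ∀ p ∈ D, F p ∈ Matrix.specialUnitaryGroup (Fin 2) ℂ)
    (hu : ∀ p ∈ D, (F p)⁻¹ * pu F p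
        = (-(pu θ p) / 2) • e3 + ((ρ p - 1) / 2 * A p) • xi1 (θ p))
    (hv : ∀ p ∈ D, (F p)⁻¹ * pv F p
        = (pv θ p / 2) • e3 - ((ρ p + 1) / 2 * B p) • xi2 (θ p))
    (hApos : ∀ p ∈ D, 0 < A p) (hBpos : ∀ p ∈ D, 0 < B p)
    (hρpos : ∀ p ∈ D, 0 < ρ p) (hρne : ∀ p ∈ D, ρ p ≠ 1)
    (hsin : ∀ p ∈ D, Real.sin (2 * θ p) ≠ 0)
    (hcodazzi1 : ∀ p ∈ D,
      pv (fun q => A q * ρ q) p - pv ρ p / (2 * ρ p) * (A p * ρ p)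
        + pu ρ p / (2 * ρ p) * (B p * ρ p) * Real.cos (2 * θ p) = 0)
    (hcodazzi2 : ∀ p ∈ D,
      pu (fun q => B q * ρ q) p - pu ρ p / (2 * ρ p) * (B p * ρ p)
        + pv ρ p / (2 * ρ p) * (A p * ρ p) * Real.cos (2 * θ p) = 0) :
    (∀ p ∈ D, (∃ k : ℝ, pv (pu (nu F)) p = k • nu F p)
        ∧ (∃ k : ℝ, pu (pv (nu F)) p = k • nu F p)) ↔
      (∀ p ∈ D, pu ρ p = 0 ∧ pv ρ p = 0) := by
  have hdiff : ∀ p ∈ D, DifferentiableAt ℝ F p := fun p hp =>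
    (hF.contDiffAt (hD.mem_nhds hp)).differentiableAt (by simp)
  have hdA : ∀ p ∈ D, DifferentiableAt ℝ A p := fun p hp =>
    (hA.contDiffAt (hD.mem_nhds hp)).differentiableAt (by simp)
  have hdB : ∀ p ∈ D, DifferentiableAt ℝ B p := fun p hp =>
    (hB.contDiffAt (hD.mem_nhds hp)).differentiableAt (by simp)
  have hdθ : ∀ p ∈ D, DifferentiableAt ℝ θ p := fun p hp =>
    (hθ.contDiffAt (hD.mem_nhds hp)).differentiableAt (by simp)
  have hdρ : ∀ p ∈ D, DifferentiableAt ℝ ρ p := fun p hp =>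
    (hρ.contDiffAt (hD.mem_nhds hp)).differentiableAt (by simp)
  have hdet : ∀ p ∈ D, (F p).det = 1 := fun p hp =>
    ((Matrix.mem_specialUnitaryGroup_iff).1 (hSU p hp)).2
  have hinv : ∀ p ∈ D, (F p)⁻¹ = adjC (F p) := by
    intro p hp
    rw [adjC_eq, Matrix.inv_def, hdet p hp]
    simp
  have hGF : ∀ p ∈ D, adjC (F p) * F p = 1 := by
    intro p hp
    rw [adjC_eq, Matrix.adjugate_mul, hdet p hp, one_smul]
  have hFmul : ∀ p ∈ D, F p * (F p)⁻¹ = 1 := fun p hp =>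
    Matrix.mul_nonsing_inv _ (by rw [hdet p hp]; exact isUnit_one)
  have hNu : ∀ p ∈ D, nu F p = F p * e3 * adjC (F p) := by
    intro p hp; rw [nu, hinv p hp]
  have hpuF : ∀ p ∈ D, fderiv ℝ F p (1, 0)
      = F p * ((-(pu θ p) / 2) • e3 + ((ρ p - 1) / 2 * A p) • xi1 (θ p)) := by
    intro p hp
    rw [← hu p hp, ← Matrix.mul_assoc, hFmul p hp, Matrix.one_mul]
    rfl
  have hpvF : ∀ p ∈ D, fderiv ℝ F p (0, 1)
      = F p * ((pv θ p / 2) • e3 - ((ρ p + 1) / 2 * B p) • xi2 (θ p)) := by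
    intro p hp
    rw [← hv p hp, ← Matrix.mul_assoc, hFmul p hp, Matrix.one_mul]
    rfl
  have hpu_nu : ∀ p ∈ D, pu (nu F) p
      = F p * (((1 - ρ p) * A p * Real.sin (θ p)) • e1
          + ((1 - ρ p) * A p * Real.cos (θ p)) • e2) * adjC (F p) := by
    intro p hp
    have heq : nu F =ᶠ[nhds p] fun q => F q * e3 * adjC (F q) :=
      Filter.eventuallyEq_of_mem (hD.mem_nhds hp) fun q hq => hNu q hq
    have h0 : pu (nu F) p = fderiv ℝ (fun q => F q * e3 * adjC (F q)) p (1, 0) := by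
      show fderiv ℝ (nu F) p (1, 0) = _
      rw [heq.fderiv_eq]
    rw [h0, deriv_formula F (fun _ => e3) p (hdiff p hp) (differentiableAt_const e3) (1, 0)]
    rw [hpuF p hp, adjC_mul_traceless _ _ (traceU _ _ _)]
    have hb' : ((-(pu θ p) / 2) • e3 + ((ρ p - 1) / 2 * A p) • xi1 (θ p)) * e3
        - e3 * ((-(pu θ p) / 2) • e3 + ((ρ p - 1) / 2 * A p) • xi1 (θ p))
        = ((1 - ρ p) * A p * Real.sin (θ p)) • e1 + ((1 - ρ p) * A p * Real.cos (θ p)) • e2 := by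
      rw [brU]
      module
    rw [← hb']
    simp only [fderiv_fun_const, Pi.zero_apply, ContinuousLinearMap.zero_apply]
    noncomm_ring
  have hpv_nu : ∀ p ∈ D, pv (nu F) p
      = F p * ((-((ρ p + 1) * B p * Real.sin (θ p))) • e1
          + ((ρ p + 1) * B p * Real.cos (θ p)) • e2) * adjC (F p) := by
    intro p hp
    have heq : nu F =ᶠ[nhds p] fun q => F q * e3 * adjC (F q) :=
      Filter.eventuallyEq_of_mem (hD.mem_nhds hp) fun q hq => hNu q hq
    have h0 : pv (nu F) p = fderiv ℝ (fun q => F q * e3 * adjC (F q)) p (0, 1) := by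
      show fderiv ℝ (nu F) p (0, 1) = _
      rw [heq.fderiv_eq]
    rw [h0, deriv_formula F (fun _ => e3) p (hdiff p hp) (differentiableAt_const e3) (0, 1)]
    rw [hpvF p hp, adjC_mul_traceless _ _ (traceV _ _ _)]
    have hb' : ((pv θ p / 2) • e3 - ((ρ p + 1) / 2 * B p) • xi2 (θ p)) * e3
        - e3 * ((pv θ p / 2) • e3 - ((ρ p + 1) / 2 * B p) • xi2 (θ p))
        = (-((ρ p + 1) * B p * Real.sin (θ p))) • e1 + ((ρ p + 1) * B p * Real.cos (θ p)) • e2 := by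
      rw [brV]
      module
    rw [← hb']
    simp only [fderiv_fun_const, Pi.zero_apply, ContinuousLinearMap.zero_apply]
    noncomm_ring
  have key1 : ∀ p ∈ D, ((∃ k : ℝ, pv (pu (nu F)) p = k • nu F p)
      ↔ pv (fun q => (1 - ρ q) * A q) p = 0) := by
    intro p hp
    have hs2 := hsin p hp
    rw [Real.sin_two_mul] at hs2
    have hsθ : Real.sin (θ p) ≠ 0 := fun h => hs2 (by rw [h]; ring)
    have hdh : DifferentiableAt ℝ (fun q => (1 - ρ q) * A q) p :=
      ((hdρ p hp).const_sub 1).mul (hdA p hp)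
    have hf1' : HasFDerivAt (fun q => (1 - ρ q) * A q * Real.sin (θ q))
        (((1 - ρ p) * A p) • (Real.cos (θ p) • fderiv ℝ θ p)
          + Real.sin (θ p) • fderiv ℝ (fun q => (1 - ρ q) * A q) p) p :=
      hdh.hasFDerivAt.mul ((hdθ p hp).hasFDerivAt.sin)
    have hg1' : HasFDerivAt (fun q => (1 - ρ q) * A q * Real.cos (θ q))
        (((1 - ρ p) * A p) • (-Real.sin (θ p) • fderiv ℝ θ p)
          + Real.cos (θ p) • fderiv ℝ (fun q => (1 - ρ q) * A q) p) p :=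
      hdh.hasFDerivAt.mul ((hdθ p hp).hasFDerivAt.cos)
    have hCf : HasFDerivAt (fun q => ((1 - ρ q) * A q * Real.sin (θ q)) • e1
          + ((1 - ρ q) * A q * Real.cos (θ q)) • e2)
        ((((1 - ρ p) * A p) • (Real.cos (θ p) • fderiv ℝ θ p)
          + Real.sin (θ p) • fderiv ℝ (fun q => (1 - ρ q) * A q) p).smulRight e1
         + (((1 - ρ p) * A p) • (-Real.sin (θ p) • fderiv ℝ θ p)
          + Real.cos (θ p) • fderiv ℝ (fun q => (1 - ρ q) * A q) p).smulRight e2) p :=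
      (hf1'.smul_const e1).add (hg1'.smul_const e2)
    have hCd : fderiv ℝ (fun q => ((1 - ρ q) * A q * Real.sin (θ q)) • e1
          + ((1 - ρ q) * A q * Real.cos (θ q)) • e2) p (0, 1)
        = ((1 - ρ p) * A p * (Real.cos (θ p) * pv θ p)
            + Real.sin (θ p) * pv (fun q => (1 - ρ q) * A q) p) • e1
          + ((1 - ρ p) * A p * (-Real.sin (θ p) * pv θ p)
            + Real.cos (θ p) * pv (fun q => (1 - ρ q) * A q) p) • e2 := by
      rw [hCf.fderiv]
      simp only [pv, ContinuousLinearMap.add_apply, ContinuousLinearMap.smulRight_apply,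
        ContinuousLinearMap.smul_apply, smul_eq_mul]
    have heq2 : pu (nu F) =ᶠ[nhds p] fun q =>
        F q * (((1 - ρ q) * A q * Real.sin (θ q)) • e1
          + ((1 - ρ q) * A q * Real.cos (θ q)) • e2) * adjC (F q) :=
      Filter.eventuallyEq_of_mem (hD.mem_nhds hp) fun q hq => hpu_nu q hq
    have h0 : pv (pu (nu F)) p = fderiv ℝ (fun q =>
        F q * (((1 - ρ q) * A q * Real.sin (θ q)) • e1
          + ((1 - ρ q) * A q * Real.cos (θ q)) • e2) * adjC (F q)) p (0, 1) := by
      show fderiv ℝ (pu (nu F)) p (0, 1) = _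
      rw [heq2.fderiv_eq]
    have hM : (((pv θ p / 2) • e3 - ((ρ p + 1) / 2 * B p) • xi2 (θ p))
          * (((1 - ρ p) * A p * Real.sin (θ p)) • e1 + ((1 - ρ p) * A p * Real.cos (θ p)) • e2)
        - (((1 - ρ p) * A p * Real.sin (θ p)) • e1 + ((1 - ρ p) * A p * Real.cos (θ p)) • e2)
          * ((pv θ p / 2) • e3 - ((ρ p + 1) / 2 * B p) • xi2 (θ p)))
        + (((1 - ρ p) * A p * (Real.cos (θ p) * pv θ p)
            + Real.sin (θ p) * pv (fun q => (1 - ρ q) * A q) p) • e1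
          + ((1 - ρ p) * A p * (-Real.sin (θ p) * pv θ p)
            + Real.cos (θ p) * pv (fun q => (1 - ρ q) * A q) p) • e2)
        = (Real.sin (θ p) * pv (fun q => (1 - ρ q) * A q) p) • e1
          + (Real.cos (θ p) * pv (fun q => (1 - ρ q) * A q) p) • e2
          + ((ρ p + 1) * B p * (1 - ρ p) * A p
              * (Real.sin (θ p) ^ 2 - Real.cos (θ p) ^ 2)) • e3 := by
      rw [Vdecomp (pv θ p / 2) ((ρ p + 1) / 2 * B p) (θ p), brW]
      module
    have h2nd : pv (pu (nu F)) p = F p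
        * ((Real.sin (θ p) * pv (fun q => (1 - ρ q) * A q) p) • e1
          + (Real.cos (θ p) * pv (fun q => (1 - ρ q) * A q) p) • e2
          + ((ρ p + 1) * B p * (1 - ρ p) * A p
              * (Real.sin (θ p) ^ 2 - Real.cos (θ p) ^ 2)) • e3)
        * adjC (F p) := by
      rw [h0, deriv_formula F _ p (hdiff p hp) hCf.differentiableAt (0, 1)]
      beta_reduce
      rw [hpvF p hp, adjC_mul_traceless _ _ (traceV _ _ _), hCd, ← hM]
      noncomm_ring
    constructor
    · rintro ⟨k, hk⟩
      rw [h2nd, hNu p hp, ← smul_conj] at hk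
      have h' := conj_cancel (hGF p hp) hk
      have hab := (scalarE3 _ _ _).1 ⟨k, h'⟩
      rcases mul_eq_zero.1 hab.1 with h | h
      · exact absurd h hsθ
      · exact h
    · intro hpvh
      refine ⟨(ρ p + 1) * B p * (1 - ρ p) * A p
          * (Real.sin (θ p) ^ 2 - Real.cos (θ p) ^ 2), ?_⟩
      rw [h2nd, hNu p hp, ← smul_conj, hpvh]
      simp
  have key2 : ∀ p ∈ D, ((∃ k : ℝ, pu (pv (nu F)) p = k • nu F p)
      ↔ pu (fun q => (ρ q + 1) * B q) p = 0) := by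
    intro p hp
    have hs2 := hsin p hp
    rw [Real.sin_two_mul] at hs2
    have hsθ : Real.sin (θ p) ≠ 0 := fun h => hs2 (by rw [h]; ring)
    have hdh2 : DifferentiableAt ℝ (fun q => (ρ q + 1) * B q) p :=
      ((hdρ p hp).add_const 1).mul (hdB p hp)
    have hf2' : HasFDerivAt (fun q => -((ρ q + 1) * B q * Real.sin (θ q)))
        (-(((ρ p + 1) * B p) • (Real.cos (θ p) • fderiv ℝ θ p)
          + Real.sin (θ p) • fderiv ℝ (fun q => (ρ q + 1) * B q) p)) p :=
      (hdh2.hasFDerivAt.mul ((hdθ p hp).hasFDerivAt.sin)).neg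
    have hg2' : HasFDerivAt (fun q => (ρ q + 1) * B q * Real.cos (θ q))
        (((ρ p + 1) * B p) • (-Real.sin (θ p) • fderiv ℝ θ p)
          + Real.cos (θ p) • fderiv ℝ (fun q => (ρ q + 1) * B q) p) p :=
      hdh2.hasFDerivAt.mul ((hdθ p hp).hasFDerivAt.cos)
    have hCf : HasFDerivAt (fun q => (-((ρ q + 1) * B q * Real.sin (θ q))) • e1
          + ((ρ q + 1) * B q * Real.cos (θ q)) • e2)
        ((-(((ρ p + 1) * B p) • (Real.cos (θ p) • fderiv ℝ θ p)
          + Real.sin (θ p) • fderiv ℝ (fun q => (ρ q + 1) * B q) p)).smulRight e1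
         + (((ρ p + 1) * B p) • (-Real.sin (θ p) • fderiv ℝ θ p)
          + Real.cos (θ p) • fderiv ℝ (fun q => (ρ q + 1) * B q) p).smulRight e2) p :=
      (hf2'.smul_const e1).add (hg2'.smul_const e2)
    have hCd : fderiv ℝ (fun q => (-((ρ q + 1) * B q * Real.sin (θ q))) • e1
          + ((ρ q + 1) * B q * Real.cos (θ q)) • e2) p (1, 0)
        = (-((ρ p + 1) * B p * (Real.cos (θ p) * pu θ p)
            + Real.sin (θ p) * pu (fun q => (ρ q + 1) * B q) p)) • e1
          + ((ρ p + 1) * B p * (-Real.sin (θ p) * pu θ p)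
            + Real.cos (θ p) * pu (fun q => (ρ q + 1) * B q) p) • e2 := by
      rw [hCf.fderiv]
      simp only [pu, ContinuousLinearMap.add_apply, ContinuousLinearMap.smulRight_apply,
        ContinuousLinearMap.smul_apply, ContinuousLinearMap.neg_apply, smul_eq_mul]
    have heq2 : pv (nu F) =ᶠ[nhds p] fun q =>
        F q * ((-((ρ q + 1) * B q * Real.sin (θ q))) • e1
          + ((ρ q + 1) * B q * Real.cos (θ q)) • e2) * adjC (F q) :=
      Filter.eventuallyEq_of_mem (hD.mem_nhds hp) fun q hq => hpv_nu q hq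
    have h0 : pu (pv (nu F)) p = fderiv ℝ (fun q =>
        F q * ((-((ρ q + 1) * B q * Real.sin (θ q))) • e1
          + ((ρ q + 1) * B q * Real.cos (θ q)) • e2) * adjC (F q)) p (1, 0) := by
      show fderiv ℝ (pv (nu F)) p (1, 0) = _
      rw [heq2.fderiv_eq]
    have hM : (((-(pu θ p) / 2) • e3 + ((ρ p - 1) / 2 * A p) • xi1 (θ p))
          * ((-((ρ p + 1) * B p * Real.sin (θ p))) • e1 + ((ρ p + 1) * B p * Real.cos (θ p)) • e2)
        - ((-((ρ p + 1) * B p * Real.sin (θ p))) • e1 + ((ρ p + 1) * B p * Real.cos (θ p)) • e2)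
          * ((-(pu θ p) / 2) • e3 + ((ρ p - 1) / 2 * A p) • xi1 (θ p)))
        + ((-((ρ p + 1) * B p * (Real.cos (θ p) * pu θ p)
            + Real.sin (θ p) * pu (fun q => (ρ q + 1) * B q) p)) • e1
          + ((ρ p + 1) * B p * (-Real.sin (θ p) * pu θ p)
            + Real.cos (θ p) * pu (fun q => (ρ q + 1) * B q) p) • e2)
        = (-(Real.sin (θ p) * pu (fun q => (ρ q + 1) * B q) p)) • e1
          + (Real.cos (θ p) * pu (fun q => (ρ q + 1) * B q) p) • e2
          + ((ρ p - 1) * A p * (ρ p + 1) * B p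
              * (Real.cos (θ p) ^ 2 - Real.sin (θ p) ^ 2)) • e3 := by
      rw [Udecomp (-(pu θ p) / 2) ((ρ p - 1) / 2 * A p) (θ p), brW]
      module
    have h2nd : pu (pv (nu F)) p = F p
        * ((-(Real.sin (θ p) * pu (fun q => (ρ q + 1) * B q) p)) • e1
          + (Real.cos (θ p) * pu (fun q => (ρ q + 1) * B q) p) • e2
          + ((ρ p - 1) * A p * (ρ p + 1) * B p
              * (Real.cos (θ p) ^ 2 - Real.sin (θ p) ^ 2)) • e3)
        * adjC (F p) := by
      rw [h0, deriv_formula F _ p (hdiff p hp) hCf.differentiableAt (1, 0)]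
      rw [hpuF p hp, adjC_mul_traceless _ _ (traceU _ _ _), hCd, ← hM]
      noncomm_ring
    constructor
    · rintro ⟨k, hk⟩
      rw [h2nd, hNu p hp, ← smul_conj] at hk
      have h' := conj_cancel (hGF p hp) hk
      have hab := (scalarE3 _ _ _).1 ⟨k, h'⟩
      have h1 := neg_eq_zero.1 hab.1
      rcases mul_eq_zero.1 h1 with h | h
      · exact absurd h hsθ
      · exact h
    · intro hpuh
      refine ⟨(ρ p - 1) * A p * (ρ p + 1) * B p
          * (Real.cos (θ p) ^ 2 - Real.sin (θ p) ^ 2), ?_⟩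
      rw [h2nd, hNu p hp, ← smul_conj, hpuh]
      simp
  have key3 : ∀ p ∈ D, ((pv (fun q => (1 - ρ q) * A q) p = 0
        ∧ pu (fun q => (ρ q + 1) * B q) p = 0)
      ↔ (pu ρ p = 0 ∧ pv ρ p = 0)) := by
    intro p hp
    have ec1 : pv (fun q => A q * ρ q) p = A p * pv ρ p + ρ p * pv A p := by
      show fderiv ℝ _ p (0, 1) = _
      rw [HasFDerivAt.fderiv (f := fun q => A q * ρ q) ((hdA p hp).hasFDerivAt.mul (hdρ p hp).hasFDerivAt)]
      simp [pv, smul_eq_mul]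
      try ring
    have ec2 : pu (fun q => B q * ρ q) p = B p * pu ρ p + ρ p * pu B p := by
      show fderiv ℝ _ p (1, 0) = _
      rw [HasFDerivAt.fderiv (f := fun q => B q * ρ q) ((hdB p hp).hasFDerivAt.mul (hdρ p hp).hasFDerivAt)]
      simp [pu, smul_eq_mul]
      try ring
    have ec3 : pv (fun q => (1 - ρ q) * A q) p = (1 - ρ p) * pv A p - A p * pv ρ p := by
      show fderiv ℝ _ p (0, 1) = _
      rw [HasFDerivAt.fderiv (f := fun q => (1 - ρ q) * A q) (((hdρ p hp).hasFDerivAt.const_sub 1).mul (hdA p hp).hasFDerivAt)]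
      simp [pv, smul_eq_mul]
      try ring
    have ec4 : pu (fun q => (ρ q + 1) * B q) p = (ρ p + 1) * pu B p + B p * pu ρ p := by
      show fderiv ℝ _ p (1, 0) = _
      rw [HasFDerivAt.fderiv (f := fun q => (ρ q + 1) * B q) (((hdρ p hp).hasFDerivAt.add_const 1).mul (hdB p hp).hasFDerivAt)]
      simp [pu, smul_eq_mul]
      try ring
    have hρ0 : ρ p ≠ 0 := ne_of_gt (hρpos p hp)
    have h1ρ : 1 - ρ p ≠ 0 := fun h => (hρne p hp) (by linarith)
    have h1ρ' : 1 + ρ p ≠ 0 := ne_of_gt (by linarith [hρpos p hp] : (0:ℝ) < 1 + ρ p)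
    have hA0 : A p ≠ 0 := ne_of_gt (hApos p hp)
    have hB0 : B p ≠ 0 := ne_of_gt (hBpos p hp)
    have hs0 := hsin p hp
    have hsc : Real.sin (2 * θ p) ^ 2 + Real.cos (2 * θ p) ^ 2 = 1 :=
      Real.sin_sq_add_cos_sq _
    have hd1 : pv ρ p / (2 * ρ p) * (A p * ρ p) = pv ρ p * A p / 2 := by
      field_simp
    have hd2 : pu ρ p / (2 * ρ p) * (B p * ρ p) = pu ρ p * B p / 2 := by
      field_simp
    have hc1 := hcodazzi1 p hp
    have hc2 := hcodazzi2 p hp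
    rw [ec1, hd1, hd2] at hc1
    rw [ec2, hd2, hd1] at hc2
    rw [ec3, ec4]
    constructor
    · rintro ⟨hE1, hE2⟩
      have hP : (1 + ρ p) * A p * pv ρ p
          + (1 - ρ p) * B p * pu ρ p * Real.cos (2 * θ p) = 0 := by
        linear_combination 2 * (1 - ρ p) * hc1 - 2 * ρ p * hE1
      have hQ : (1 - ρ p) * B p * pu ρ p
          + (1 + ρ p) * A p * pv ρ p * Real.cos (2 * θ p) = 0 := by
        linear_combination 2 * (ρ p + 1) * hc2 - 2 * ρ p * hE2
      have hQQ : (1 - ρ p) * B p * pu ρ p * Real.sin (2 * θ p) ^ 2 = 0 := by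
        linear_combination hQ - Real.cos (2 * θ p) * hP
          + (1 - ρ p) * B p * pu ρ p * hsc
      have hx0 : pu ρ p = 0 := by
        rcases mul_eq_zero.1 hQQ with h | h
        · rcases mul_eq_zero.1 h with h' | h'
          · rcases mul_eq_zero.1 h' with h'' | h''
            · exact absurd h'' h1ρ
            · exact absurd h'' hB0
          · exact h'
        · exact absurd h (pow_ne_zero 2 hs0)
      have hy0 : pv ρ p = 0 := by
        have h := hP
        rw [hx0] at h
        have h' : (1 + ρ p) * A p * pv ρ p = 0 := by linarith
        rcases mul_eq_zero.1 h' with h'' | h''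
        · rcases mul_eq_zero.1 h'' with h3 | h3
          · exact absurd h3 h1ρ'
          · exact absurd h3 hA0
        · exact h''
      exact ⟨hx0, hy0⟩
    · rintro ⟨hx, hy⟩
      have hpvA : pv A p = 0 := by
        have h := hc1
        rw [hx, hy] at h
        simp at h
        rcases h with h | h
        · exact absurd h hρ0
        · exact h
      have hpuB : pu B p = 0 := by
        have h := hc2
        rw [hx, hy] at h
        simp at h
        rcases h with h | h
        · exact absurd h hρ0
        · exact h
      constructor
      · rw [hy, hpvA]; ring
      · rw [hx, hpuB]; ring
  constructor
  · intro H p hp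
    exact (key3 p hp).1 ⟨(key1 p hp).1 (H p hp).1, (key2 p hp).1 (H p hp).2⟩
  · intro H p hp
    obtain ⟨h1, h2⟩ := (key3 p hp).2 (H p hp)
    exact ⟨(key1 p hp).2 h1, (key2 p hp).2 h2⟩
end
end

section
/- Let D ⊆ ℝ² be open, let f, F : D → SU(2) and A, B, θ, ρ : D → ℝ be smooth with A > 0, B > 0 and sin(2θ) ≠ 0 at every point, and suppose f⁻¹·∂ᵤf = A·F·ξ₁(θ)·F⁻¹ and f⁻¹·∂ᵥf = B·F·ξ₂(θ)·F⁻¹ on D. Write F⁻¹·∂ᵤF = a₁·e₁ + a₂·e₂ + a₃·e₃ with real-valued functions a₁, a₂, a₃ on D. If at a point p ∈ D one has ⟨F·e₃·F⁻¹, f⁻¹·∂ᵤ∂ᵤf⟩ = 0 and ⟨F·e₃·F⁻¹, f⁻¹·∂ᵥ∂ᵤf⟩ = ρ·A·B·sin(2θ), then a₁(p) = A(p)·(ρ(p)-1)·cos(θ(p))/2 and a₂(p) = -A(p)·(ρ(p)-1)·sin(θ(p))/2. -/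
open Matrix

attribute [local instance] Matrix.frobeniusNormedAddCommGroup Matrix.frobeniusNormedSpace

noncomputable section

/-- The real inner product `⟨X, Y⟩ = -(1/2)·Re(Tr(X·Y))` on 2×2 complex matrices. -/
def ip (X Y : Matrix (Fin 2) (Fin 2) ℂ) : ℝ := -(1 / 2) * (Matrix.trace (X * Y)).re

/-! ### Auxiliary material -/

instance m2NormedRing : NormedRing (Matrix (Fin 2) (Fin 2) ℂ) :=
  { (Matrix.frobeniusNormedAddCommGroup : NormedAddCommGroup (Matrix (Fin 2) (Fin 2) ℂ)),
    Matrix.instRing with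
    norm_mul_le := Matrix.frobenius_norm_mul }

instance m2NormedAlgebra : NormedAlgebra ℝ (Matrix (Fin 2) (Fin 2) ℂ) :=
  { (Matrix.frobeniusNormedSpace : NormedSpace ℝ (Matrix (Fin 2) (Fin 2) ℂ)),
    Matrix.instAlgebra with }

instance m2Top : TopologicalSpace (Matrix (Fin 2) (Fin 2) ℂ) :=
  @UniformSpace.toTopologicalSpace _ (@PseudoMetricSpace.toUniformSpace _
    (Matrix.frobeniusNormedAddCommGroup : NormedAddCommGroup (Matrix (Fin 2) (Fin 2) ℂ)).toPseudoMetricSpace)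

abbrev M2' := Matrix (Fin 2) (Fin 2) ℂ

lemma ip_add' (X Y Z : M2') : ip X (Y + Z) = ip X Y + ip X Z := by
  simp [ip, Matrix.mul_add]; ring

lemma ip_sub' (X Y Z : M2') : ip X (Y - Z) = ip X Y - ip X Z := by
  simp [ip, Matrix.mul_sub]; ring

lemma ip_smul' (r : ℝ) (X Y : M2') : ip X (r • Y) = r * ip X Y := by
  simp [ip, Matrix.mul_smul, Complex.real_smul]; ring

lemma ip_conj' (F X Y : M2') (h : star F * F = 1) :
    ip (F * X * star F) (F * Y * star F) = ip X Y := by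
  unfold ip
  congr 2
  have key : F * X * star F * (F * Y * star F) = F * (X * Y) * star F := by
    calc F * X * star F * (F * Y * star F) = F * X * (star F * F) * Y * star F := by
          simp only [Matrix.mul_assoc]
      _ = F * (X * Y) * star F := by rw [h]; simp only [Matrix.mul_one, Matrix.mul_assoc]
  rw [key, Matrix.trace_mul_comm, ← Matrix.mul_assoc, h, Matrix.one_mul]

lemma ip_e3_lin (x1 x2 x3 : ℝ) : ip e3 (x1 • e1 + x2 • e2 + x3 • e3) = x3 := by
  simp [ip, e1, e2, e3, Matrix.trace_fin_two, Matrix.mul_apply, Fin.sum_univ_two,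
    Complex.real_smul]
  ring

lemma ip_e3_mul (x1 x2 x3 y1 y2 y3 : ℝ) :
    ip e3 ((x1 • e1 + x2 • e2 + x3 • e3) * (y1 • e1 + y2 • e2 + y3 • e3))
      = x1 * y2 - x2 * y1 := by
  simp [ip, e1, e2, e3, Matrix.trace_fin_two, Matrix.mul_apply, Fin.sum_univ_two,
    Complex.real_smul]
  ring

lemma star_combo (x1 x2 x3 : ℝ) :
    star (x1 • e1 + x2 • e2 + x3 • e3) = -(x1 • e1 + x2 • e2 + x3 • e3) := by
  ext i j
  fin_cases i <;> fin_cases j <;>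
    simp [e1, e2, e3, Matrix.star_eq_conjTranspose, Matrix.conjTranspose_apply,
      Complex.real_smul] <;> ring

lemma xi1_combo (t : ℝ) : xi1 t = Real.cos t • e1 + (-Real.sin t) • e2 + (0:ℝ) • e3 := by
  simp [xi1, sub_eq_add_neg, neg_smul]

lemma xi2_combo (t : ℝ) : xi2 t = Real.cos t • e1 + Real.sin t • e2 + (0:ℝ) • e3 := by
  simp [xi2]

lemma hasDerivAt_xi1 (t : ℝ) :
    HasDerivAt xi1 ((-Real.sin t) • e1 - Real.cos t • e2) t :=
  ((Real.hasDerivAt_cos t).smul_const e1).sub ((Real.hasDerivAt_sin t).smul_const e2)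

lemma hasDerivAt_xi2 (t : ℝ) :
    HasDerivAt xi2 ((-Real.sin t) • e1 + Real.cos t • e2) t :=
  ((Real.hasDerivAt_cos t).smul_const e1).add ((Real.hasDerivAt_sin t).smul_const e2)

lemma xi1'_combo (t : ℝ) :
    (-Real.sin t) • e1 - Real.cos t • e2
      = (-Real.sin t) • e1 + (-Real.cos t) • e2 + (0:ℝ) • e3 := by
  simp [sub_eq_add_neg, neg_smul]

lemma pv_pu_comm {f : ℝ × ℝ → M2'} {p : ℝ × ℝ} (h : ContDiffAt ℝ (⊤ : ℕ∞) f p) :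
    pv (pu f) p = pu (pv f) p := by
  have hd2 : DifferentiableAt ℝ (fderiv ℝ f) p :=
    (h.fderiv_right (m := 1) (WithTop.coe_le_coe.mpr le_top)).differentiableAt one_ne_zero
  have hsymm := h.isSymmSndFDerivAt (by rw [minSmoothness_of_isRCLikeNormedField, ← WithTop.coe_ofNat]; exact WithTop.coe_le_coe.mpr le_top)
  have key : ∀ v w : ℝ × ℝ, fderiv ℝ (fun q => fderiv ℝ f q v) p w
      = fderiv ℝ (fderiv ℝ f) p w v := by
    intro v w
    exact congrArg (fun L => L w)
      ((ContinuousLinearMap.apply ℝ M2' v).hasFDerivAt.comp p hd2.hasFDerivAt).fderiv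
  show fderiv ℝ (fun q => fderiv ℝ f q (1,0)) p (0,1)
      = fderiv ℝ (fun q => fderiv ℝ f q (0,1)) p (1,0)
  rw [key, key]
  exact hsymm _ _

set_option maxHeartbeats 2000000 in
theorem coefficients_a1_a2
    (D : Set (ℝ × ℝ)) (hD : IsOpen D)
    (f F : ℝ × ℝ → Matrix (Fin 2) (Fin 2) ℂ) (A B θ ρ : ℝ × ℝ → ℝ)
    (hf : ContDiffOn ℝ (⊤ : ℕ∞) f D) (hF : ContDiffOn ℝ (⊤ : ℕ∞) F D)
    (hA : ContDiffOn ℝ (⊤ : ℕ∞) A D) (hB : ContDiffOn ℝ (⊤ : ℕ∞) B D)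
    (hθ : ContDiffOn ℝ (⊤ : ℕ∞) θ D) (hρ : ContDiffOn ℝ (⊤ : ℕ∞) ρ D)
    (hfSU : ∀ p ∈ D, f p ∈ Matrix.specialUnitaryGroup (Fin 2) ℂ)
    (hFSU : ∀ p ∈ D, F p ∈ Matrix.specialUnitaryGroup (Fin 2) ℂ)
    (hApos : ∀ p ∈ D, 0 < A p) (hBpos : ∀ p ∈ D, 0 < B p)
    (hsin : ∀ p ∈ D, Real.sin (2 * θ p) ≠ 0)
    (hfu : ∀ p ∈ D, (f p)⁻¹ * pu f p = A p • (F p * xi1 (θ p) * (F p)⁻¹))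
    (hfv : ∀ p ∈ D, (f p)⁻¹ * pv f p = B p • (F p * xi2 (θ p) * (F p)⁻¹))
    (a1 a2 a3 : ℝ × ℝ → ℝ)
    (hFu : ∀ p ∈ D, (F p)⁻¹ * pu F p = a1 p • e1 + a2 p • e2 + a3 p • e3)
    (p : ℝ × ℝ) (hp : p ∈ D)
    (h2ffuu : ip (F p * e3 * (F p)⁻¹) ((f p)⁻¹ * pu (pu f) p) = 0)
    (h2ffuv : ip (F p * e3 * (F p)⁻¹) ((f p)⁻¹ * pv (pu f) p)
      = ρ p * A p * B p * Real.sin (2 * θ p)) :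
    a1 p = A p * (ρ p - 1) * Real.cos (θ p) / 2
      ∧ a2 p = -(A p * (ρ p - 1) * Real.sin (θ p) / 2) := by
  have hpD : D ∈ nhds p := hD.mem_nhds hp
  have hfdet : ∀ q ∈ D, IsUnit (f q).det := fun q hq => by
    rw [((Matrix.mem_specialUnitaryGroup_iff).mp (hfSU q hq)).2]; exact isUnit_one
  have hFdet : ∀ q ∈ D, IsUnit (F q).det := fun q hq => by
    rw [((Matrix.mem_specialUnitaryGroup_iff).mp (hFSU q hq)).2]; exact isUnit_one
  have hFinv : ∀ q ∈ D, (F q)⁻¹ = star (F q) := fun q hq =>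
    Matrix.inv_eq_left_inv
      ((Matrix.mem_unitaryGroup_iff').mp ((Matrix.mem_specialUnitaryGroup_iff).mp (hFSU q hq)).1)
  have hFstF : star (F p) * F p = 1 :=
    (Matrix.mem_unitaryGroup_iff').mp ((Matrix.mem_specialUnitaryGroup_iff).mp (hFSU p hp)).1
  have hcol : ∀ Z : M2', star (F p) * (F p * Z) = Z := fun Z => by
    rw [← Matrix.mul_assoc, hFstF, Matrix.one_mul]
  have heu : pu f =ᶠ[nhds p] fun q => f q * (A q • (F q * xi1 (θ q) * star (F q))) := by
    filter_upwards [hpD] with q hq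
    have h2 : f q * ((f q)⁻¹ * pu f q) = pu f q := by
      rw [← Matrix.mul_assoc, Matrix.mul_nonsing_inv _ (hfdet q hq), Matrix.one_mul]
    rw [← h2, hfu q hq, hFinv q hq]
  have hev : pv f =ᶠ[nhds p] fun q => f q * (B q • (F q * xi2 (θ q) * star (F q))) := by
    filter_upwards [hpD] with q hq
    have h2 : f q * ((f q)⁻¹ * pv f q) = pv f q := by
      rw [← Matrix.mul_assoc, Matrix.mul_nonsing_inv _ (hfdet q hq), Matrix.one_mul]
    rw [← h2, hfv q hq, hFinv q hq]
  -- differentiability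
  have hfC : ContDiffAt ℝ (⊤ : ℕ∞) f p := hf.contDiffAt hpD
  have hf' : HasFDerivAt f (fderiv ℝ f p) p :=
    (hfC.differentiableAt (by simp)).hasFDerivAt
  have hF' : HasFDerivAt F (fderiv ℝ F p) p :=
    ((hF.contDiffAt hpD).differentiableAt (by simp)).hasFDerivAt
  have hA' : HasFDerivAt A (fderiv ℝ A p) p :=
    ((hA.contDiffAt hpD).differentiableAt (by simp)).hasFDerivAt
  have hB' : HasFDerivAt B (fderiv ℝ B p) p :=
    ((hB.contDiffAt hpD).differentiableAt (by simp)).hasFDerivAt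
  have hθ' : HasFDerivAt θ (fderiv ℝ θ p) p :=
    ((hθ.contDiffAt hpD).differentiableAt (by simp)).hasFDerivAt
  have hxi1c : HasFDerivAt (fun q => xi1 (θ q))
      (((1 : ℝ →L[ℝ] ℝ).smulRight ((-Real.sin (θ p)) • e1 - Real.cos (θ p) • e2)) ∘L
        fderiv ℝ θ p) p :=
    (hasDerivAt_xi1 (θ p)).hasFDerivAt.comp p hθ'
  have hxi2c : HasFDerivAt (fun q => xi2 (θ q))
      (((1 : ℝ →L[ℝ] ℝ).smulRight ((-Real.sin (θ p)) • e1 + Real.cos (θ p) • e2)) ∘L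
        fderiv ℝ θ p) p :=
    (hasDerivAt_xi2 (θ p)).hasFDerivAt.comp p hθ'
  have hstF : HasFDerivAt (fun q => star (F q))
      (((starL' ℝ : M2' ≃L[ℝ] M2') : M2' →L[ℝ] M2') ∘L fderiv ℝ F p) p := hF'.star
  have hN' : HasFDerivAt (fun q => A q • (F q * xi1 (θ q) * star (F q))) _ p := hA'.smul ((hF'.mul' hxi1c).mul' hstF)
  have hN2' : HasFDerivAt (fun q => B q • (F q * xi2 (θ q) * star (F q))) _ p := hB'.smul ((hF'.mul' hxi2c).mul' hstF)
  -- value of the logarithmic derivatives at p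
  have hNfu : (f p)⁻¹ * pu f p = A p • (F p * xi1 (θ p) * star (F p)) := by
    rw [hfu p hp, hFinv p hp]
  have hN2fv : (f p)⁻¹ * pv f p = B p • (F p * xi2 (θ p) * star (F p)) := by
    rw [hfv p hp, hFinv p hp]
  have hfinv_f : (f p)⁻¹ * f p = 1 := Matrix.nonsing_inv_mul _ (hfdet p hp)
  -- derivative of the connection matrices in the u direction
  have hpuN : pu (fun q => A q • (F q * xi1 (θ q) * star (F q))) p
      = fderiv ℝ A p (1, 0) • (F p * xi1 (θ p) * star (F p))
        + A p • ((fderiv ℝ θ p (1, 0) • (F p * ((-Real.sin (θ p)) • e1 - Real.cos (θ p) • e2))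
            + fderiv ℝ F p (1, 0) * xi1 (θ p)) * star (F p))
        + A p • (F p * xi1 (θ p) * star (fderiv ℝ F p (1, 0))) := by
    show fderiv ℝ _ p (1, 0) = _
    rw [hN'.fderiv]
    simp [ContinuousLinearMap.smulRight_apply, smul_eq_mul, mul_comm]
    simp only [mul_smul_comm, smul_mul_assoc, mul_add, add_mul, mul_sub, sub_mul, mul_neg,
      neg_mul, smul_smul, smul_add, smul_sub, smul_neg, neg_smul, Matrix.mul_assoc]
    module
  have hpuN2 : pu (fun q => B q • (F q * xi2 (θ q) * star (F q))) p
      = fderiv ℝ B p (1, 0) • (F p * xi2 (θ p) * star (F p))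
        + B p • ((fderiv ℝ θ p (1, 0) • (F p * ((-Real.sin (θ p)) • e1 + Real.cos (θ p) • e2))
            + fderiv ℝ F p (1, 0) * xi2 (θ p)) * star (F p))
        + B p • (F p * xi2 (θ p) * star (fderiv ℝ F p (1, 0))) := by
    show fderiv ℝ _ p (1, 0) = _
    rw [hN2'.fderiv]
    simp [ContinuousLinearMap.smulRight_apply, smul_eq_mul, mul_comm]
    simp only [mul_smul_comm, smul_mul_assoc, mul_add, add_mul, mul_sub, sub_mul, mul_neg,
      neg_mul, smul_smul, smul_add, smul_sub, smul_neg, neg_smul, Matrix.mul_assoc]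
    module
  -- the structure equation data
  have hFu' : fderiv ℝ F p (1, 0) = F p * (a1 p • e1 + a2 p • e2 + a3 p • e3) := by
    have h2 : F p * ((F p)⁻¹ * pu F p) = pu F p := by
      rw [← Matrix.mul_assoc, Matrix.mul_nonsing_inv _ (hFdet p hp), Matrix.one_mul]
    show pu F p = _
    rw [← h2, hFu p hp]
  have hstarFu : star (fderiv ℝ F p (1, 0))
      = -((a1 p • e1 + a2 p • e2 + a3 p • e3) * star (F p)) := by
    rw [hFu', Matrix.star_mul, star_combo, neg_mul]
  -- second derivative identities, conjugated form
  have hTu : (f p)⁻¹ * pu (pu f) p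
      = F p * ((A p * A p) • (xi1 (θ p) * xi1 (θ p))
          + fderiv ℝ A p (1, 0) • xi1 (θ p)
          + (A p * fderiv ℝ θ p (1, 0)) • ((-Real.sin (θ p)) • e1 - Real.cos (θ p) • e2)
          + A p • ((a1 p • e1 + a2 p • e2 + a3 p • e3) * xi1 (θ p))
          - A p • (xi1 (θ p) * (a1 p • e1 + a2 p • e2 + a3 p • e3))) * star (F p) := by
    have h2 : pu (pu f) p
        = f p * pu (fun q => A q • (F q * xi1 (θ q) * star (F q))) p
          + pu f p * (A p • (F p * xi1 (θ p) * star (F p))) := by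
      show fderiv ℝ (pu f) p (1, 0)
          = f p * fderiv ℝ (fun q => A q • (F q * xi1 (θ q) * star (F q))) p (1, 0)
            + fderiv ℝ f p (1, 0) * (A p • (F p * xi1 (θ p) * star (F p)))
      rw [heu.fderiv_eq, (show HasFDerivAt (fun q => f q * (A q • (F q * xi1 (θ q) * star (F q)))) _ p from
        hf'.mul' hN').fderiv, hN'.fderiv]
      simp only [ContinuousLinearMap.add_apply, ContinuousLinearMap.smul_apply,
        ContinuousLinearMap.smulRight_apply, smul_eq_mul, op_smul_eq_mul]
    rw [h2, Matrix.mul_add, ← Matrix.mul_assoc, ← Matrix.mul_assoc, hfinv_f, Matrix.one_mul,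
      hNfu, hpuN, hstarFu, hFu']
    simp only [Matrix.mul_add, Matrix.add_mul, smul_add, Matrix.mul_smul, Matrix.smul_mul,
      smul_smul, Matrix.mul_neg, Matrix.neg_mul, smul_neg, Matrix.mul_assoc, hcol,
      Matrix.mul_sub, Matrix.sub_mul, sub_eq_add_neg]
    module
  have hpvpu : pv (pu f) p = pu (pv f) p := pv_pu_comm hfC
  have hTv : (f p)⁻¹ * pv (pu f) p
      = F p * ((A p * B p) • (xi1 (θ p) * xi2 (θ p))
          + fderiv ℝ B p (1, 0) • xi2 (θ p)
          + (B p * fderiv ℝ θ p (1, 0)) • ((-Real.sin (θ p)) • e1 + Real.cos (θ p) • e2)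
          + B p • ((a1 p • e1 + a2 p • e2 + a3 p • e3) * xi2 (θ p))
          - B p • (xi2 (θ p) * (a1 p • e1 + a2 p • e2 + a3 p • e3))) * star (F p) := by
    have h2 : pu (pv f) p
        = f p * pu (fun q => B q • (F q * xi2 (θ q) * star (F q))) p
          + pu f p * (B p • (F p * xi2 (θ p) * star (F p))) := by
      show fderiv ℝ (pv f) p (1, 0)
          = f p * fderiv ℝ (fun q => B q • (F q * xi2 (θ q) * star (F q))) p (1, 0)
            + fderiv ℝ f p (1, 0) * (B p • (F p * xi2 (θ p) * star (F p)))
      rw [hev.fderiv_eq, (show HasFDerivAt (fun q => f q * (B q • (F q * xi2 (θ q) * star (F q)))) _ p from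
        hf'.mul' hN2').fderiv, hN2'.fderiv]
      simp only [ContinuousLinearMap.add_apply, ContinuousLinearMap.smul_apply,
        ContinuousLinearMap.smulRight_apply, smul_eq_mul, op_smul_eq_mul]
    rw [hpvpu, h2, Matrix.mul_add, ← Matrix.mul_assoc, ← Matrix.mul_assoc, hfinv_f,
      Matrix.one_mul, hNfu, hpuN2, hstarFu, hFu']
    simp only [Matrix.mul_add, Matrix.add_mul, smul_add, Matrix.mul_smul, Matrix.smul_mul,
      smul_smul, Matrix.mul_neg, Matrix.neg_mul, smul_neg, Matrix.mul_assoc, hcol,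
      Matrix.mul_sub, Matrix.sub_mul, sub_eq_add_neg]
    module
  -- reduce the inner products
  have hic : ∀ X Y : M2', ip (F p * X * star (F p)) (F p * Y * star (F p)) = ip X Y :=
    fun X Y => ip_conj' _ _ _ hFstF
  rw [hTu, hFinv p hp, hic] at h2ffuu
  rw [hTv, hFinv p hp, hic] at h2ffuv
  -- explicit values of inner products
  have hv1 : ip e3 (xi1 (θ p) * xi1 (θ p)) = 0 := by
    rw [xi1_combo, ip_e3_mul]; ring
  have hv2 : ip e3 (xi1 (θ p)) = 0 := by rw [xi1_combo, ip_e3_lin]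
  have hv2' : ip e3 (xi2 (θ p)) = 0 := by rw [xi2_combo, ip_e3_lin]
  have hv3 : ip e3 ((-Real.sin (θ p)) • e1 - Real.cos (θ p) • e2) = 0 := by
    rw [xi1'_combo, ip_e3_lin]
  have hv3' : ip e3 ((-Real.sin (θ p)) • e1 + Real.cos (θ p) • e2) = 0 := by
    have : (-Real.sin (θ p)) • e1 + Real.cos (θ p) • e2
        = (-Real.sin (θ p)) • e1 + Real.cos (θ p) • e2 + (0:ℝ) • e3 := by simp
    rw [this, ip_e3_lin]
  have hv4 : ip e3 ((a1 p • e1 + a2 p • e2 + a3 p • e3) * xi1 (θ p))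
      = a1 p * (-Real.sin (θ p)) - a2 p * Real.cos (θ p) := by
    rw [xi1_combo, ip_e3_mul]
  have hv5 : ip e3 (xi1 (θ p) * (a1 p • e1 + a2 p • e2 + a3 p • e3))
      = Real.cos (θ p) * a2 p - (-Real.sin (θ p)) * a1 p := by
    rw [xi1_combo, ip_e3_mul]
  have hv6 : ip e3 (xi1 (θ p) * xi2 (θ p))
      = Real.cos (θ p) * Real.sin (θ p) - (-Real.sin (θ p)) * Real.cos (θ p) := by
    rw [xi1_combo, xi2_combo, ip_e3_mul]
  have hv7 : ip e3 ((a1 p • e1 + a2 p • e2 + a3 p • e3) * xi2 (θ p))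
      = a1 p * Real.sin (θ p) - a2 p * Real.cos (θ p) := by
    rw [xi2_combo, ip_e3_mul]
  have hv8 : ip e3 (xi2 (θ p) * (a1 p • e1 + a2 p • e2 + a3 p • e3))
      = Real.cos (θ p) * a2 p - Real.sin (θ p) * a1 p := by
    rw [xi2_combo, ip_e3_mul]
  simp only [ip_add', ip_sub', ip_smul', hv1, hv2, hv2', hv3, hv3', hv4, hv5, hv6, hv7, hv8,
    mul_zero, add_zero, zero_add] at h2ffuu h2ffuv
  -- final algebra
  rw [Real.sin_two_mul] at h2ffuv
  have hsc : Real.sin (θ p) * Real.cos (θ p) ≠ 0 := by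
    have := hsin p hp
    rw [Real.sin_two_mul] at this
    intro h; apply this; rw [mul_assoc, h, mul_zero]
  have hs : Real.sin (θ p) ≠ 0 := fun h => hsc (by rw [h, zero_mul])
  have hc : Real.cos (θ p) ≠ 0 := fun h => hsc (by rw [h, mul_zero])
  have hA0 : A p ≠ 0 := (hApos p hp).ne'
  have hB0 : B p ≠ 0 := (hBpos p hp).ne'
  have h1 : a1 p * Real.sin (θ p) + a2 p * Real.cos (θ p) = 0 := by
    apply mul_left_cancel₀ hA0
    linear_combination -(1:ℝ)/2 * h2ffuu
  have h2 : a1 p * Real.sin (θ p) - a2 p * Real.cos (θ p)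
      = A p * (ρ p - 1) * Real.sin (θ p) * Real.cos (θ p) := by
    apply mul_left_cancel₀ hB0
    linear_combination (1:ℝ)/2 * h2ffuv
  constructor
  · apply mul_right_cancel₀ hs
    linear_combination (h1 + h2) / 2
  · apply mul_right_cancel₀ hc
    linear_combination (h1 - h2) / 2

end
end
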